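/- Let {t_n}_{n=0}^∞ be a Stieltjes moment sequence and let ϑ > 0; set t_{-1} = ϑ, and suppose {t_{n-1}}_{n=0}^∞ is a Stieltjes moment sequence. Let M₀(ϑ) be the set of representing measures μ of {t_n}_{n=0}^∞ with ∫_{[0,∞)} (1/s) dμ(s) ≤ ϑ, and let M₋₁(ϑ) be the set of all representing measures of {t_{n-1}}_{n=0}^∞. Then the mapping M₀(ϑ) ∋ μ ↦ ν_μ ∈ M₋₁(ϑ), where ν_μ(σ) = ∫_σ (1/s) dμ(s) + (ϑ − ∫_{[0,∞)} (1/s) dμ(s)) δ₀(σ) for Borel sets σ ⊆ [0,∞), is a well-defined bijection whose inverse M₋₁(ϑ) ∋ ν ↦ μ_ν ∈ M₀(ϑ) is given by μ_ν(σ) = ∫_σ s dν(s). Moreover, if in addition {t_n}_{n=0}^∞ is determinate, then {t_{n-1}}_{n=0}^∞ is determinate, the unique representing measure μ of {t_n}_{n=0}^∞ satisfies ∫_{[0,∞)} (1/s) dμ(s) ≤ ϑ, and ν_μ is the unique representing measure of {t_{n-1}}_{n=0}^∞. -/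

import Mathlib

open MeasureTheory ENNReal
open scoped NNReal
noncomputable section

/-- `μ` is a representing measure of the sequence `t`. -/
def IsRepMeasure (μ : Measure ℝ≥0) (t : ℕ → ℝ) : Prop :=
  ∀ n : ℕ, Integrable (fun s : ℝ≥0 => (s : ℝ) ^ n) μ ∧ t n = ∫ s, (s : ℝ) ^ n ∂μ

/-- `t` is a Stieltjes moment sequence. -/
def IsStieltjesMoment (t : ℕ → ℝ) : Prop := ∃ μ : Measure ℝ≥0, IsRepMeasure μ t

/-- `t` is a determinate Stieltjes moment sequence. -/
def IsDetStieltjesMoment (t : ℕ → ℝ) : Prop := ∃! μ : Measure ℝ≥0, IsRepMeasure μ t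

section Operators

universe u
variable {H : Type u} [NormedAddCommGroup H] [InnerProductSpace ℂ H]

/-- The maximal domain of the composition `S ∘ T`. -/
def compDomain (S T : H →ₗ.[ℂ] H) : Submodule ℂ H where
  carrier := {x | ∃ hx : x ∈ T.domain, T ⟨x, hx⟩ ∈ S.domain}
  zero_mem' := ⟨T.domain.zero_mem, by
    have h0 : (⟨0, T.domain.zero_mem⟩ : T.domain) = 0 := rfl
    rw [h0, LinearPMap.map_zero]; exact S.domain.zero_mem⟩
  add_mem' := by
    rintro x y ⟨hx, hx'⟩ ⟨hy, hy'⟩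
    refine ⟨T.domain.add_mem hx hy, ?_⟩
    have : (⟨x + y, T.domain.add_mem hx hy⟩ : T.domain) = ⟨x, hx⟩ + ⟨y, hy⟩ := rfl
    rw [this, LinearPMap.map_add]
    exact S.domain.add_mem hx' hy'
  smul_mem' := by
    rintro c x ⟨hx, hx'⟩
    refine ⟨T.domain.smul_mem c hx, ?_⟩
    have : (⟨c • x, T.domain.smul_mem c hx⟩ : T.domain) = c • (⟨x, hx⟩ : T.domain) := rfl
    rw [this, LinearPMap.map_smul]
    exact S.domain.smul_mem c hx'

/-- Composition `S ∘ T` of partial operators, on the maximal domain. -/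
def pmapComp (S T : H →ₗ.[ℂ] H) : H →ₗ.[ℂ] H :=
  S.comp (T.domRestrict (compDomain S T)) (by
    rintro ⟨x, hx⟩
    have hxT : x ∈ T.domain := (Submodule.mem_inf.mp hx).2
    have hxD : x ∈ compDomain S T := (Submodule.mem_inf.mp hx).1
    exact (congrArg (· ∈ S.domain) (LinearPMap.domRestrict_apply
      (show ((⟨x, hx⟩ : ↥(compDomain S T ⊓ T.domain)) : H)
      = ((⟨x, hxT⟩ : T.domain) : H) from rfl))).mpr hxD.choose_spec)

/-- Powers of a partial operator: `pmapPow S n = Sⁿ` with its natural domain. -/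
def pmapPow (S : H →ₗ.[ℂ] H) : ℕ → (H →ₗ.[ℂ] H)
  | 0 => LinearMap.id.toPMap ⊤
  | n + 1 => pmapComp (pmapPow S n) S

open Classical in
/-- Total (junk-valued) application of the power `Sⁿ`. -/
def powApp (S : H →ₗ.[ℂ] H) (n : ℕ) (x : H) : H :=
  if h : x ∈ (pmapPow S n).domain then (pmapPow S n) ⟨x, h⟩ else 0

/-- The set of `C^∞`-vectors of `S`. -/
def Dinf (S : H →ₗ.[ℂ] H) : Set H := {x | ∀ n : ℕ, x ∈ (pmapPow S n).domain}

/-- `F` is a core of `S`. -/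
def IsCore (S : H →ₗ.[ℂ] H) (F : Submodule ℂ H) : Prop :=
  F ≤ S.domain ∧ (S.graph : Set (H × H)) ⊆ closure ((S.domRestrict F).graph : Set (H × H))

end Operators
section Operators
universe u
variable {H : Type u} [NormedAddCommGroup H] [InnerProductSpace ℂ H]

/-- A normal (unbounded) operator: closed, densely defined, with `D(N*) = D(N)` and
`‖N* x‖ = ‖N x‖` on the common domain. -/
def IsNormalOp [CompleteSpace H] (N : H →ₗ.[ℂ] H) : Prop :=
  Dense (N.domain : Set H) ∧ N.IsClosed ∧ N.adjoint.domain = N.domain ∧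
    ∀ (x : H) (hx : x ∈ N.domain) (hx' : x ∈ N.adjoint.domain),
      ‖N.adjoint ⟨x, hx'⟩‖ = ‖N ⟨x, hx⟩‖

/-- A subnormal operator: densely defined with a normal extension in a possibly
larger Hilbert space. -/
def IsSubnormal {H : Type u} [NormedAddCommGroup H] [InnerProductSpace ℂ H]
    (S : H →ₗ.[ℂ] H) : Prop :=
  Dense (S.domain : Set H) ∧
  ∃ (K : Type u) (_ : NormedAddCommGroup K) (_ : InnerProductSpace ℂ K) (_ : CompleteSpace K)
    (J : H →ₗᵢ[ℂ] K) (N : K →ₗ.[ℂ] K), IsNormalOp N ∧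
      ∀ x : S.domain, ∃ hx : J x ∈ N.domain, N ⟨J x, hx⟩ = J (S x)

/-- A hyponormal operator. -/
def IsHyponormal [CompleteSpace H] (S : H →ₗ.[ℂ] H) : Prop :=
  Dense (S.domain : Set H) ∧
  ∀ (x : H) (hx : x ∈ S.domain), ∃ hx' : x ∈ S.adjoint.domain,
      ‖S.adjoint ⟨x, hx'⟩‖ ≤ ‖S ⟨x, hx⟩‖

end Operators

/-- A directed tree on the vertex set `V`: a connected directed graph without circuits
in which every non-root vertex has a unique parent. -/
structure DirectedTree (V : Type*) where
  edge : V → V → Prop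
  connected : ∀ u v : V, Relation.ReflTransGen (fun a b => edge a b ∨ edge b a) u v
  no_circuits : ∀ v : V, ¬ Relation.TransGen edge v v
  parent_unique : ∀ u v w : V, edge v u → edge w u → v = w

namespace DirectedTree

variable {V : Type*}

/-- The roots: vertices with no incoming edge. -/
def isRoot (T : DirectedTree V) (v : V) : Prop := ¬ ∃ u : V, T.edge u v

/-- `V°`: the non-root vertices, i.e. vertices having a parent. -/
def nonRoot (T : DirectedTree V) (v : V) : Prop := ∃ u : V, T.edge u v

open Classical in
/-- The parent function (with junk value at roots). -/
def par (T : DirectedTree V) (v : V) : V := if h : ∃ u : V, T.edge u v then h.choose else v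

/-- The set of children of a vertex. -/
def chi (T : DirectedTree V) (u : V) : Set V := {v | T.edge u v}

/-- Iterated children `Chi^n(u)`. -/
def chiN (T : DirectedTree V) : ℕ → V → Set V
  | 0, u => {u}
  | n + 1, u => ⋃ w ∈ T.chiN n u, T.chi w

/-- The descendants of `u`. -/
def des (T : DirectedTree V) (u : V) : Set V := ⋃ n : ℕ, T.chiN n u

/-- `T` is leafless: every vertex has a child. -/
def Leafless (T : DirectedTree V) : Prop := ∀ u : V, ∃ v : V, T.edge u v

/-- The product `λ_{u∣v} = ∏_{j=0}^{n-1} λ_{par^j(v)}` of the weights along the path of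
length `n` ending at `v` (for `v ∈ Chi^n(u)` this is the usual `λ_{u∣v}`). -/
def pathProd (T : DirectedTree V) (lam : V → ℂ) (n : ℕ) (v : V) : ℂ :=
  ∏ j ∈ Finset.range n, lam (T.par^[j] v)

open Classical in
/-- The formal weighted-shift transformation `Λ_T` on families of complex numbers. -/
def lamMap (T : DirectedTree V) (lam : V → ℂ) (f : V → ℂ) : V → ℂ :=
  fun v => if T.nonRoot v then lam v * f (T.par v) else 0

variable (T : DirectedTree V)

theorem lamMap_add (lam : V → ℂ) (f g : V → ℂ) :
    T.lamMap lam (f + g) = T.lamMap lam f + T.lamMap lam g := by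
  funext v; simp only [lamMap, Pi.add_apply]; split <;> ring

theorem lamMap_smul (lam : V → ℂ) (c : ℂ) (f : V → ℂ) :
    T.lamMap lam (c • f) = c • T.lamMap lam f := by
  funext v; simp only [lamMap, Pi.smul_apply, smul_eq_mul]; split <;> ring

theorem lamMap_zero (lam : V → ℂ) : T.lamMap lam (0 : V → ℂ) = 0 := by
  funext v; simp [lamMap]

/-- The domain of the weighted shift `S_λ`. -/
def shiftDomain (lam : V → ℂ) : Submodule ℂ (lp (fun _ : V => ℂ) 2) where
  carrier := {f | Memℓp (T.lamMap lam f) 2}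
  zero_mem' := by
    rw [Set.mem_setOf_eq, lp.coeFn_zero, lamMap_zero]
    exact zero_memℓp
  add_mem' := by
    intro f g hf hg
    rw [Set.mem_setOf_eq, lp.coeFn_add, lamMap_add]
    exact hf.add hg
  smul_mem' := by
    intro c f hf
    rw [Set.mem_setOf_eq, lp.coeFn_smul, lamMap_smul]
    exact hf.const_smul c

/-- The weighted shift `S_λ` on the directed tree `T`, as a partial operator in `ℓ²(V)`. -/
def shift (lam : V → ℂ) : lp (fun _ : V => ℂ) 2 →ₗ.[ℂ] lp (fun _ : V => ℂ) 2 where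
  domain := T.shiftDomain lam
  toFun :=
    { toFun := fun f => (⟨T.lamMap lam f, f.2⟩ : lp (fun _ : V => ℂ) 2)
      map_add' := by
        rintro f g
        apply lp.ext
        rw [lp.coeFn_add]
        show T.lamMap lam
            ((((f : lp (fun _ : V => ℂ) 2) : V → ℂ)) + (((g : lp (fun _ : V => ℂ) 2) : V → ℂ)))
          = T.lamMap lam ((f : lp (fun _ : V => ℂ) 2) : V → ℂ)
            + T.lamMap lam ((g : lp (fun _ : V => ℂ) 2) : V → ℂ)
        exact T.lamMap_add lam _ _
      map_smul' := by
        rintro c f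
        apply lp.ext
        rw [lp.coeFn_smul]
        show T.lamMap lam (c • (((f : lp (fun _ : V => ℂ) 2) : V → ℂ)))
          = c • T.lamMap lam ((f : lp (fun _ : V => ℂ) 2) : V → ℂ)
        exact T.lamMap_smul lam c _ }

end DirectedTree

open Classical in
/-- The basis vector `e_u` of `ℓ²(V)`. -/
def eVec {V : Type*} (u : V) : lp (fun _ : V => ℂ) 2 := lp.single 2 u 1

section MoreDefs
universe u
variable {H : Type u} [NormedAddCommGroup H] [InnerProductSpace ℂ H]

/-- The inner product, linear in the FIRST argument (the paper's convention). -/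
def innerPaper (x y : H) : ℂ := inner ℂ y x

/-- The moment sequence `n ↦ ‖Sⁿ f‖²` generated by the vector `f`. -/
def momentSeq (S : H →ₗ.[ℂ] H) (f : H) : ℕ → ℝ := fun n => ‖powApp S n f‖ ^ 2

/-- `f` is a quasi-analytic vector of `S` : `f ∈ D^∞(S)` and
`∑ₙ ‖Sⁿ f‖^{-1/n} = ∞` (with `1/0 = ∞`). -/
def IsQuasiAnalyticVec (S : H →ₗ.[ℂ] H) (f : H) : Prop :=
  (∀ n : ℕ, f ∈ (pmapPow S n).domain) ∧
  ∑' n : ℕ, ((‖powApp S (n + 1) f‖₊ ^ ((1 : ℝ) / (n + 1)) : ℝ≥0) : ℝ≥0∞)⁻¹ = ∞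

end MoreDefs

/-- The consistency condition `μ_u(σ) = ∑_{v ∈ Chi(u)} |λ_v|² ∫_σ (1/s) dμ_v(s) + ε_u δ₀(σ)`
at the vertex `u` (with the convention `1/0 = ∞`). -/
def consistentAt {V : Type*} (T : DirectedTree V) (lam : V → ℂ) (μ : V → MeasureTheory.Measure ℝ≥0)
    (ε : V → ℝ≥0) (u : V) : Prop :=
  ∀ σ : Set ℝ≥0, MeasurableSet σ →
    μ u σ = (∑' v : {v : V // T.edge u v},
        (‖lam (v : V)‖₊ : ℝ≥0∞) ^ 2 * ∫⁻ s in σ, ((s : ℝ≥0∞))⁻¹ ∂(μ (v : V)))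
      + (ε u : ℝ≥0∞) * MeasureTheory.Measure.dirac (0 : ℝ≥0) σ

/-- The sequence `{ϑ, t₀, t₁, t₂, …}` obtained by prepending `ϑ` to `t`. -/
def shiftedSeq (ϑ : ℝ) (t : ℕ → ℝ) : ℕ → ℝ := fun n => match n with
  | 0 => ϑ
  | n + 1 => t n

/-- A positive definite sequence of real numbers. -/
def IsPosDefSeq (t : ℕ → ℝ) : Prop :=
  ∀ (n : ℕ) (α : ℕ → ℂ),
    0 ≤ (∑ k ∈ Finset.range (n + 1), ∑ l ∈ Finset.range (n + 1),
        (t (k + l) : ℂ) * α k * (starRingEnd ℂ) (α l)).re ∧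
    (∑ k ∈ Finset.range (n + 1), ∑ l ∈ Finset.range (n + 1),
        (t (k + l) : ℂ) * α k * (starRingEnd ℂ) (α l)).im = 0


/-- The map `μ ↦ ν_μ` from Lemma 2.1. -/
def nuMap (ϑ : ℝ) (μ : Measure ℝ≥0) : Measure ℝ≥0 :=
  μ.withDensity (fun s => ((s : ℝ≥0∞))⁻¹)
    + (ENNReal.ofReal ϑ - ∫⁻ s, ((s : ℝ≥0∞))⁻¹ ∂μ) • Measure.dirac (0 : ℝ≥0)

/-- The map `ν ↦ μ_ν` from Lemma 2.1. -/
def muMap (ν : Measure ℝ≥0) : Measure ℝ≥0 := ν.withDensity fun s => (s : ℝ≥0∞)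

/-! Multiplying a measure on `[0,∞)` by the density `s` turns its `(n+1)`-st moment into its
`n`-th one, so `ν ↦ μ_ν` maps representing measures of `{t_{n-1}}` to those of `{t_n}`. It forgets
only the atom of `ν` at `0`, which the zeroth moment `ν([0,∞)) = ϑ` recovers; conversely
`∫ 1/s dμ < ∞` forces `μ {0} = 0`, so the density `1/s` undoes the density `s`. Given determinacy
of `{t_n}`, every representing measure of `{t_{n-1}}` is `ν_μ` for the unique `μ`, and the
existence of one of them gives `∫ 1/s dμ ≤ ϑ`. -/

lemma isRepMeasure_iff_lintegral {μ : Measure ℝ≥0} {t : ℕ → ℝ} :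
    IsRepMeasure μ t ↔ ∀ n : ℕ, 0 ≤ t n ∧ ∫⁻ s, (s : ℝ≥0∞) ^ n ∂μ = ENNReal.ofReal (t n) := by
  have hpow : ∀ n (s : ℝ≥0), ENNReal.ofReal ((s : ℝ) ^ n) = (s : ℝ≥0∞) ^ n := fun n s => by
    rw [ENNReal.ofReal_pow s.coe_nonneg, ENNReal.ofReal_coe_nnreal]
  refine forall_congr' fun n => ?_
  have hnn : 0 ≤ᵐ[μ] fun s : ℝ≥0 => (s : ℝ) ^ n := ae_of_all _ fun s => by positivity
  have hmeas : AEStronglyMeasurable (fun s : ℝ≥0 => (s : ℝ) ^ n) μ :=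
    (NNReal.continuous_coe.pow n).aestronglyMeasurable
  simp_rw [← hpow n]
  constructor
  · rintro ⟨hint, htn⟩
    rw [htn]
    exact ⟨integral_nonneg fun s => by positivity,
      (ofReal_integral_eq_lintegral_ofReal hint hnn).symm⟩
  · rintro ⟨htn, hlint⟩
    refine ⟨⟨hmeas, ?_⟩, ?_⟩
    · rw [hasFiniteIntegral_iff_ofReal hnn, hlint]
      exact ofReal_lt_top
    · rw [integral_eq_lintegral_of_nonneg_ae hnn hmeas, hlint, ENNReal.toReal_ofReal htn]

lemma lintegral_pow_muMap (ν : Measure ℝ≥0) (n : ℕ) :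
    ∫⁻ s, (s : ℝ≥0∞) ^ n ∂(muMap ν) = ∫⁻ s, (s : ℝ≥0∞) ^ (n + 1) ∂ν := by
  rw [muMap, lintegral_withDensity_eq_lintegral_mul _ measurable_coe_nnreal_ennreal
    (measurable_coe_nnreal_ennreal.pow_const n)]
  simp only [Pi.mul_apply, pow_succ']

lemma isRepMeasure_shiftedSeq_iff {ν : Measure ℝ≥0} {ϑ : ℝ} {t : ℕ → ℝ} :
    IsRepMeasure ν (shiftedSeq ϑ t) ↔
      (0 ≤ ϑ ∧ ν Set.univ = ENNReal.ofReal ϑ) ∧ IsRepMeasure (muMap ν) t := by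
  simp only [isRepMeasure_iff_lintegral, lintegral_pow_muMap]
  constructor
  · intro h
    exact ⟨by simpa [shiftedSeq] using h 0, fun n => h (n + 1)⟩
  · rintro ⟨h0, hsucc⟩ (_ | n)
    · simpa [shiftedSeq] using h0
    · exact hsucc n

lemma withDensity_coe_mul_inv (μ : Measure ℝ≥0) :
    μ.withDensity (fun s => (s : ℝ≥0∞) * (s : ℝ≥0∞)⁻¹) = μ.restrict {0}ᶜ := by
  rw [← withDensity_indicator_one (measurableSet_singleton 0).compl]
  congr 1
  funext s
  by_cases hs : s = 0
  · simp [hs]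
  · rw [ENNReal.mul_inv_cancel (by simpa using hs) coe_ne_top,
      Set.indicator_of_mem (by simpa using hs), Pi.one_apply]

lemma withDensity_inv_muMap (ν : Measure ℝ≥0) :
    (muMap ν).withDensity (fun s => (s : ℝ≥0∞)⁻¹) = ν.restrict {0}ᶜ := by
  rw [muMap, ← withDensity_coe_mul_inv]
  exact (withDensity_mul _ measurable_coe_nnreal_ennreal measurable_coe_nnreal_ennreal.inv).symm

lemma lintegral_inv_muMap (ν : Measure ℝ≥0) :
    ∫⁻ s, (s : ℝ≥0∞)⁻¹ ∂(muMap ν) = ν {0}ᶜ := by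
  rw [← setLIntegral_univ, ← withDensity_apply _ MeasurableSet.univ, withDensity_inv_muMap,
    Measure.restrict_apply_univ]

lemma nuMap_muMap {ν : Measure ℝ≥0} [IsFiniteMeasure ν] {ϑ : ℝ}
    (hϑ : ν Set.univ = ENNReal.ofReal ϑ) : nuMap ϑ (muMap ν) = ν := by
  have hatom : ENNReal.ofReal ϑ - ν ({0}ᶜ : Set ℝ≥0) = ν {0} := by
    rw [← hϑ, ← measure_add_measure_compl (measurableSet_singleton (0 : ℝ≥0)),
      ENNReal.add_sub_cancel_right (measure_ne_top ν _)]
  rw [nuMap, withDensity_inv_muMap, lintegral_inv_muMap, hatom, ← Measure.restrict_singleton,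
    add_comm, Measure.restrict_add_restrict_compl (measurableSet_singleton 0)]

lemma measure_zero_eq_zero_of_lintegral_inv_ne_top {μ : Measure ℝ≥0}
    (hμ : ∫⁻ s, (s : ℝ≥0∞)⁻¹ ∂μ ≠ ∞) : μ {0} = 0 := by
  have hfin : ∀ᵐ s : ℝ≥0 ∂μ, (s : ℝ≥0∞)⁻¹ < ∞ := ae_lt_top measurable_coe_nnreal_ennreal.inv hμ
  rw [← compl_mem_ae_iff]
  filter_upwards [hfin] with s hs
  simpa [pos_iff_ne_zero] using hs

lemma muMap_nuMap {μ : Measure ℝ≥0} (hμ : ∫⁻ s, (s : ℝ≥0∞)⁻¹ ∂μ ≠ ∞) (ϑ : ℝ) :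
    muMap (nuMap ϑ μ) = μ := by
  have hdens : (μ.withDensity fun s => (s : ℝ≥0∞)⁻¹).withDensity (fun s => (s : ℝ≥0∞))
      = μ.restrict {0}ᶜ := by
    rw [← withDensity_mul (f := fun s : ℝ≥0 => (s : ℝ≥0∞)⁻¹) (g := fun s : ℝ≥0 => (s : ℝ≥0∞)) _
      measurable_coe_nnreal_ennreal.inv measurable_coe_nnreal_ennreal, ← withDensity_coe_mul_inv]
    exact congrArg _ (funext fun s => mul_comm (s : ℝ≥0∞)⁻¹ s)
  rw [muMap, nuMap, withDensity_add_measure, withDensity_smul_measure, dirac_withDensity, hdens]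
  simp only [coe_zero, zero_smul, smul_zero, add_zero]
  exact Measure.restrict_eq_self_of_ae_mem
    (compl_mem_ae_iff.mpr (measure_zero_eq_zero_of_lintegral_inv_ne_top hμ))

lemma nuMap_apply_univ {μ : Measure ℝ≥0} {ϑ : ℝ}
    (hμ : ∫⁻ s, (s : ℝ≥0∞)⁻¹ ∂μ ≤ ENNReal.ofReal ϑ) : nuMap ϑ μ Set.univ = ENNReal.ofReal ϑ := by
  rw [nuMap, Measure.add_apply, withDensity_apply _ MeasurableSet.univ, Measure.restrict_univ,
    Measure.smul_apply, measure_univ, smul_eq_mul, mul_one, add_tsub_cancel_of_le hμ]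

lemma isRepMeasure_nuMap {μ : Measure ℝ≥0} {t : ℕ → ℝ} {ϑ : ℝ} (hϑ : 0 ≤ ϑ)
    (hμ : IsRepMeasure μ t) (hinv : ∫⁻ s, (s : ℝ≥0∞)⁻¹ ∂μ ≤ ENNReal.ofReal ϑ) :
    IsRepMeasure (nuMap ϑ μ) (shiftedSeq ϑ t) := by
  refine isRepMeasure_shiftedSeq_iff.mpr ⟨⟨hϑ, nuMap_apply_univ hinv⟩, ?_⟩
  rwa [muMap_nuMap (ne_top_of_le_ne_top ofReal_ne_top hinv)]

lemma IsRepMeasure.muMap_of_shiftedSeq {ν : Measure ℝ≥0} {t : ℕ → ℝ} {ϑ : ℝ}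
    (hν : IsRepMeasure ν (shiftedSeq ϑ t)) :
    IsRepMeasure (muMap ν) t ∧ ∫⁻ s, (s : ℝ≥0∞)⁻¹ ∂(muMap ν) ≤ ENNReal.ofReal ϑ
      ∧ nuMap ϑ (muMap ν) = ν := by
  obtain ⟨⟨-, huniv⟩, hrep⟩ := isRepMeasure_shiftedSeq_iff.mp hν
  have : IsFiniteMeasure ν := ⟨huniv ▸ ofReal_lt_top⟩
  refine ⟨hrep, ?_, nuMap_muMap huniv⟩
  rw [lintegral_inv_muMap, ← huniv]
  exact measure_mono (Set.subset_univ _)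

theorem stmt1_general (t : ℕ → ℝ) (ϑ : ℝ) (hϑ : 0 < ϑ)
    (hsh : IsStieltjesMoment (shiftedSeq ϑ t)) :
    (∀ μ : Measure ℝ≥0, IsRepMeasure μ t → (∫⁻ s, ((s : ℝ≥0∞))⁻¹ ∂μ) ≤ ENNReal.ofReal ϑ →
      IsRepMeasure (nuMap ϑ μ) (shiftedSeq ϑ t) ∧ muMap (nuMap ϑ μ) = μ)
    ∧ (∀ ν : Measure ℝ≥0, IsRepMeasure ν (shiftedSeq ϑ t) →
      IsRepMeasure (muMap ν) t ∧ (∫⁻ s, ((s : ℝ≥0∞))⁻¹ ∂(muMap ν)) ≤ ENNReal.ofReal ϑ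
        ∧ nuMap ϑ (muMap ν) = ν)
    ∧ (IsDetStieltjesMoment t →
        IsDetStieltjesMoment (shiftedSeq ϑ t)
        ∧ ∀ μ : Measure ℝ≥0, IsRepMeasure μ t →
            (∫⁻ s, ((s : ℝ≥0∞))⁻¹ ∂μ) ≤ ENNReal.ofReal ϑ
            ∧ ∀ ν : Measure ℝ≥0, IsRepMeasure ν (shiftedSeq ϑ t) → ν = nuMap ϑ μ) := by
  refine ⟨fun μ hμ hinv => ⟨isRepMeasure_nuMap hϑ.le hμ hinv,
      muMap_nuMap (ne_top_of_le_ne_top ofReal_ne_top hinv) ϑ⟩,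
    fun ν hν => hν.muMap_of_shiftedSeq, fun hdet => ?_⟩
  obtain ⟨μ₀, hμ₀, huniq⟩ := hdet
  obtain ⟨ν₀, hν₀⟩ := hsh
  have hinv₀ : ∫⁻ s, (s : ℝ≥0∞)⁻¹ ∂μ₀ ≤ ENNReal.ofReal ϑ := by
    obtain ⟨hrep, hinv, -⟩ := hν₀.muMap_of_shiftedSeq
    rwa [← huniq _ hrep]
  have hν_eq : ∀ ν, IsRepMeasure ν (shiftedSeq ϑ t) → ν = nuMap ϑ μ₀ := fun ν hν => by
    obtain ⟨hrep, -, hν_inv⟩ := hν.muMap_of_shiftedSeq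
    rw [← hν_inv, huniq _ hrep]
  refine ⟨⟨nuMap ϑ μ₀, isRepMeasure_nuMap hϑ.le hμ₀ hinv₀, hν_eq⟩, fun μ hμ => ?_⟩
  rw [huniq μ hμ]
  exact ⟨hinv₀, hν_eq⟩

/-- the bijection `M₀(ϑ) ∋ μ ↦ ν_μ ∈ M₋₁(ϑ)` with inverse `ν ↦ μ_ν`,
and the determinacy statement. -/
theorem stmt1 (t : ℕ → ℝ) (ht : IsStieltjesMoment t) (ϑ : ℝ) (hϑ : 0 < ϑ)
    (hsh : IsStieltjesMoment (shiftedSeq ϑ t)) :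
    (∀ μ : Measure ℝ≥0, IsRepMeasure μ t → (∫⁻ s, ((s : ℝ≥0∞))⁻¹ ∂μ) ≤ ENNReal.ofReal ϑ →
      IsRepMeasure (nuMap ϑ μ) (shiftedSeq ϑ t) ∧ muMap (nuMap ϑ μ) = μ)
    ∧ (∀ ν : Measure ℝ≥0, IsRepMeasure ν (shiftedSeq ϑ t) →
      IsRepMeasure (muMap ν) t ∧ (∫⁻ s, ((s : ℝ≥0∞))⁻¹ ∂(muMap ν)) ≤ ENNReal.ofReal ϑ
        ∧ nuMap ϑ (muMap ν) = ν)
    ∧ (IsDetStieltjesMoment t →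
        IsDetStieltjesMoment (shiftedSeq ϑ t)
        ∧ ∀ μ : Measure ℝ≥0, IsRepMeasure μ t →
            (∫⁻ s, ((s : ℝ≥0∞))⁻¹ ∂μ) ≤ ENNReal.ofReal ϑ
            ∧ ∀ ν : Measure ℝ≥0, IsRepMeasure ν (shiftedSeq ϑ t) → ν = nuMap ϑ μ) :=
  stmt1_general t ϑ hϑ hsh
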